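/- arXiv:1802.02705 — 2 statements merged into one kernel-verified Lean document; each statement's English description precedes it below -/
import Mathlib

section
/- Let R be a regular F-finite domain of prime characteristic p, 𝔞 a nonzero ideal of R, and t, s nonnegative real numbers with t < 1 and s ∈ ℕ. Then 𝔞^[t+s] = 𝔞^[t] · 𝔞^[s] (an analog of Skoda's theorem); in particular, for any t ≥ 0, 𝔞^[t] = 𝔞^[⌊t⌋] · 𝔞^[{t}] where {t} is the fractional part of t. -/
open scoped BigOperators

/-- The `q`-th bracket power of an ideal: the ideal generated by `q`-th powers
of elements of `a`. -/
def bracketPow {R : Type*} [CommRing R] (a : Ideal R) (q : ℕ) : Ideal R :=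
  Ideal.span ((fun x => x ^ q) '' (a : Set R))

/-- The generalized `k`-th Frobenius power of an ideal, defined via the base-`p`
digits of `k`:  `𝔞^[k] = ∏ᵢ (𝔞^[pⁱ])^(kᵢ)` where `kᵢ = k / pⁱ % p` is the `i`-th
base-`p` digit of `k` (digits with index `> k` vanish, so the product below suffices). -/
def frobPow {R : Type*} [CommRing R] (p : ℕ) (a : Ideal R) (k : ℕ) : Ideal R :=
  ∏ i ∈ Finset.range (k + 1), bracketPow a (p ^ i) ^ (k / p ^ i % p)

/-- The `q`-th Frobenius root `𝔠^[1/q]`: the smallest ideal `𝔡` with `𝔠 ⊆ 𝔡^[q]`.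
(Over a regular F-finite domain the infimum below is itself such an ideal, by
flatness of Frobenius, so it is indeed the smallest one.) -/
def frobRoot {R : Type*} [CommRing R] (q : ℕ) (c : Ideal R) : Ideal R :=
  sInf {d : Ideal R | c ≤ bracketPow d q}

/-- The `p`-rational Frobenius power `𝔞^[k/pᵉ] = (𝔞^[k])^[1/pᵉ]`, given in terms of a
representation `k/pᵉ` of a nonnegative `p`-rational number. -/
def pRatPow {R : Type*} [CommRing R] (p : ℕ) (a : Ideal R) (k e : ℕ) : Ideal R :=
  frobRoot (p ^ e) (frobPow p a k)

/-- The real Frobenius power `𝔞^[t]`: by monotonicity and right constancy of the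
`p`-rational powers, the eventual stable value of `𝔞^[t_k]` along any sequence of
`p`-rational numbers `t_k` decreasing to `t` is the supremum of `𝔞^[c]` over all
`p`-rational `c ≥ t`. -/
noncomputable def realFrobPow {R : Type*} [CommRing R] (p : ℕ) (a : Ideal R) (t : ℝ) :
    Ideal R :=
  ⨆ (k : ℕ) (e : ℕ) (_ : t ≤ (k : ℝ) / (p : ℝ) ^ e), pRatPow p a k e

/-- The test ideal `τ(𝔞^t) = ⋃_q (𝔞^{⌈tq⌉})^[1/q]` (the union being a supremum that
stabilizes for `q ≫ 0`). -/
noncomputable def testIdeal {R : Type*} [CommRing R] (p : ℕ) (a : Ideal R) (t : ℝ) :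
    Ideal R :=
  ⨆ e : ℕ, frobRoot (p ^ e) (a ^ ⌈t * (p : ℝ) ^ e⌉₊)

/-!
Since Frobenius is finite and flat over the Noetherian ring `R`, `F^e_* R` is a projective
`R`-module. Expanding elements in the coordinates given by a splitting of a free module onto it
shows that Frobenius roots satisfy `(𝔟^[q] · 𝔠)^[1/q] = 𝔟 · 𝔠^[1/q]`. The base-`p` digit
description of `𝔞^[k]` gives `𝔞^[k + q s] = 𝔞^[k] · (𝔞^[s])^[q]` for `k < q`, and
`𝔞^[m + n] ⊆ 𝔞^[m] 𝔞^[n]` always. Hence `𝔞^[k/q] ⊆ 𝔞^[s] · 𝔞^[t]` whenever `k/q ≥ t + s`.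
Conversely, as `t < 1`, every `p`-rational `k/q ≥ t` can be lowered, after refining its
denominator, to one in `[t, 1)`, i.e. with numerator `< q`, where the product formula is an
equality.
-/

open scoped Pointwise

namespace Ideal

variable {R S : Type*} [CommRing R] [CommRing S]

-- For `f` the `e`-th iterated Frobenius of `R` this is, definitionally, `frobRoot (p ^ e)`.
def root (f : R →+* S) (J : Ideal S) : Ideal R :=
  sInf {d | J ≤ d.map f}

section Projective

variable [Algebra R S]

theorem apply_mem_mul_span_of_mem_smul {s : S →ₗ[R] S →₀ R} {I : Ideal R} {N : Submodule R S}
    {x : S} (hx : x ∈ I • N) (i : S) : s x i ∈ I * span {r | ∃ y ∈ N, ∃ j, s y j = r} := by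
  refine Submodule.smul_induction_on hx (fun r hr y hy => ?_) fun x y hx hy => ?_
  · rw [map_smul, Finsupp.smul_apply, smul_eq_mul]
    exact mul_mem_mul hr (subset_span ⟨y, hy, i, rfl⟩)
  · rw [map_add, Finsupp.add_apply]
    exact add_mem hx hy

theorem root_algebraMap_eq_span {s : S →ₗ[R] S →₀ R}
    (hs : Function.LeftInverse (Finsupp.linearCombination R id) s) (J : Ideal S) :
    root (algebraMap R S) J = span {r | ∃ x ∈ J, ∃ i, s x i = r} := by
  refine le_antisymm (sInf_le fun x hx => ?_) (le_sInf fun d hd => span_le.mpr ?_)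
  · rw [← hs x, Finsupp.linearCombination_apply]
    refine Submodule.finsuppSum_mem _ _ _ _ fun i _ => ?_
    rw [Algebra.smul_def]
    exact mul_mem_right _ _ (mem_map_of_mem _ (subset_span ⟨x, hx, i, rfl⟩))
  · rintro _ ⟨x, hx, i, rfl⟩
    have hx' : x ∈ d • (⊤ : Submodule R S) := by
      rw [smul_top_eq_map]
      exact hd hx
    exact mul_le_left (apply_mem_mul_span_of_mem_smul hx' i)

theorem root_map_algebraMap_mul [Module.Projective R S] (I : Ideal R) (J : Ideal S) :
    root (algebraMap R S) (I.map (algebraMap R S) * J) = I * root (algebraMap R S) J := by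
  obtain ⟨s, hs⟩ := Module.projective_def.mp ‹_›
  rw [root_algebraMap_eq_span hs, root_algebraMap_eq_span hs]
  refine le_antisymm (span_le.mpr ?_) ?_
  · rintro _ ⟨x, hx, i, rfl⟩
    have hx' : x ∈ I • J.restrictScalars R := by
      rw [← smul_restrictScalars, smul_eq_mul]
      exact hx
    exact apply_mem_mul_span_of_mem_smul hx' i
  · have hI : I * span {r | ∃ x ∈ J, ∃ i, s x i = r} =
        span ((I : Set R) * {r | ∃ x ∈ J, ∃ i, s x i = r}) := by
      simpa using span_mul_span' (I : Set R) {r | ∃ x ∈ J, ∃ i, s x i = r}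
    rw [hI, span_le]
    rintro _ ⟨r, hr, _, ⟨x, hx, i, rfl⟩, rfl⟩
    refine subset_span ⟨r • x, ?_, i, by rw [map_smul, Finsupp.smul_apply, smul_eq_mul]⟩
    rw [Algebra.smul_def]
    exact mul_mem_mul (mem_map_of_mem _ hr) hx

end Projective

theorem root_map_mul [IsNoetherianRing R] {f : R →+* S} (hf : f.Finite) (hflat : f.Flat)
    (I : Ideal R) (J : Ideal S) : root f (I.map f * J) = I * root f J := by
  let := f.toAlgebra
  have : Module.Finite R S := hf
  have : Module.Flat R S := hflat
  have := Module.finitePresentation_of_finite R S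
  have := Module.Flat.projective_of_finitePresentation (R := R) (M := S)
  exact root_map_algebraMap_mul I J

end Ideal

section FrobeniusRoot

variable {R : Type*} [CommRing R]

@[simp]
theorem bracketPow_one (a : Ideal R) : bracketPow a 1 = a := by
  simp [bracketPow]

theorem bracketPow_le_self (a : Ideal R) {q : ℕ} (hq : q ≠ 0) : bracketPow a q ≤ a :=
  Ideal.span_le.mpr <| Set.image_subset_iff.mpr fun _ hx => a.pow_mem_of_mem hx q hq.bot_lt

theorem frobRoot_le {q : ℕ} {c d : Ideal R} (h : c ≤ bracketPow d q) : frobRoot q c ≤ d :=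
  sInf_le h

theorem frobRoot_mono (q : ℕ) {c c' : Ideal R} (h : c ≤ c') : frobRoot q c ≤ frobRoot q c' :=
  le_sInf fun _ hd => sInf_le (h.trans hd)

@[simp]
theorem frobRoot_one (c : Ideal R) : frobRoot 1 c = c :=
  le_antisymm (frobRoot_le (bracketPow_one c).ge) (le_sInf fun d hd => by rwa [← bracketPow_one d])

theorem frobRoot_top {q : ℕ} (hq : q ≠ 0) : frobRoot q (⊤ : Ideal R) = ⊤ :=
  le_antisymm le_top <| le_sInf fun d hd => hd.trans (bracketPow_le_self d hq)

variable (p : ℕ) [Fact p.Prime] [CharP R p]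

theorem bracketPow_pow_eq_map (a : Ideal R) (e : ℕ) :
    bracketPow a (p ^ e) = a.map (iterateFrobenius R p e) :=
  rfl

theorem frobRoot_map_le (e : ℕ) (c : Ideal R) :
    frobRoot (p ^ e) (c.map (iterateFrobenius R p e)) ≤ c :=
  frobRoot_le le_rfl

theorem iterateFrobenius_succ' (e : ℕ) :
    iterateFrobenius R p (e + 1) = (frobenius R p).comp (iterateFrobenius R p e) := by
  rw [add_comm, iterateFrobenius_add, iterateFrobenius_one]

theorem iterateFrobenius_finite (h : (frobenius R p).Finite) :
    ∀ e, (iterateFrobenius R p e).Finite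
  | 0 => by simpa using RingHom.Finite.id R
  | e + 1 => by
    rw [iterateFrobenius_succ']
    exact h.comp (iterateFrobenius_finite h e)

theorem iterateFrobenius_flat (h : (frobenius R p).Flat) : ∀ e, (iterateFrobenius R p e).Flat
  | 0 => by simpa using RingHom.Flat.id R
  | e + 1 => by
    rw [iterateFrobenius_succ']
    exact (iterateFrobenius_flat h e).comp h

variable [IsNoetherianRing R] {p}

theorem frobRoot_map_mul (hfin : (frobenius R p).Finite) (hflat : (frobenius R p).Flat)
    (e : ℕ) (I J : Ideal R) :
    frobRoot (p ^ e) (I.map (iterateFrobenius R p e) * J) = I * frobRoot (p ^ e) J :=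
  Ideal.root_map_mul (iterateFrobenius_finite p hfin e) (iterateFrobenius_flat p hflat e) I J

theorem frobRoot_map (hfin : (frobenius R p).Finite) (hflat : (frobenius R p).Flat)
    (e : ℕ) (I : Ideal R) : frobRoot (p ^ e) (I.map (iterateFrobenius R p e)) = I := by
  simpa [frobRoot_top (pow_ne_zero e (Fact.out : p.Prime).ne_zero)] using
    frobRoot_map_mul hfin hflat e I ⊤

theorem map_iterateFrobenius_le_map_iff (hfin : (frobenius R p).Finite)
    (hflat : (frobenius R p).Flat) (e : ℕ) {I J : Ideal R} :
    I.map (iterateFrobenius R p e) ≤ J.map (iterateFrobenius R p e) ↔ I ≤ J := by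
  refine ⟨fun h => ?_, Ideal.map_mono⟩
  rw [← frobRoot_map hfin hflat e I, ← frobRoot_map hfin hflat e J]
  exact frobRoot_mono _ h

theorem frobRoot_pow_add_map (hfin : (frobenius R p).Finite) (hflat : (frobenius R p).Flat)
    (e j : ℕ) (c : Ideal R) :
    frobRoot (p ^ (e + j)) (c.map (iterateFrobenius R p j)) = frobRoot (p ^ e) c := by
  have hmap (d : Ideal R) :
      bracketPow d (p ^ (e + j)) = (bracketPow d (p ^ e)).map (iterateFrobenius R p j) := by
    rw [bracketPow_pow_eq_map, bracketPow_pow_eq_map, Ideal.map_map, ← iterateFrobenius_add,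
      add_comm]
  simp only [frobRoot, hmap, map_iterateFrobenius_le_map_iff hfin hflat]

end FrobeniusRoot

section FrobeniusPower

variable {R : Type*} [CommRing R] {p : ℕ} (a : Ideal R)

@[simp]
theorem frobPow_zero : frobPow p a 0 = ⊤ := by
  simp [frobPow]

variable [Fact p.Prime]

theorem frobPow_eq_prod_range {k n : ℕ} (hk : k < p ^ n) :
    frobPow p a k = ∏ i ∈ Finset.range n, bracketPow a (p ^ i) ^ (k / p ^ i % p) := by
  have hp : 1 < p := (Fact.out : p.Prime).one_lt
  have hdigit : ∀ i ≥ min n k, bracketPow a (p ^ i) ^ (k / p ^ i % p) = 1 := fun i hi => by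
    have hkN : k < p ^ min n k := by
      rcases min_choice n k with h | h <;> rw [h]
      · exact hk
      · exact Nat.lt_pow_self hp
    rw [Nat.div_eq_of_lt (hkN.trans_le (Nat.pow_le_pow_right hp.le hi)), Nat.zero_mod, pow_zero]
  rw [frobPow, Finset.eventually_constant_prod hdigit ((min_le_right _ _).trans k.le_succ),
    Finset.eventually_constant_prod hdigit (min_le_left _ _)]

variable [CharP R p]

theorem frobPow_add_mul {r : ℕ} (hr : r < p) (k : ℕ) :
    frobPow p a (r + p * k) = a ^ r * (frobPow p a k).map (frobenius R p) := by
  have hp : 1 < p := (Fact.out : p.Prime).one_lt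
  have hk : k < p ^ k := Nat.lt_pow_self hp
  have hrk : r + p * k < p ^ (k + 1) := by rw [pow_succ']; nlinarith
  have hdigit (i : ℕ) : (r + p * k) / p ^ (i + 1) = k / p ^ i := by
    rw [pow_succ', ← Nat.div_div_eq_div_mul, Nat.add_mul_div_left _ _ (by omega),
      Nat.div_eq_of_lt hr, zero_add]
  have hbracket (i : ℕ) :
      bracketPow a (p ^ (i + 1)) = (bracketPow a (p ^ i)).map (frobenius R p) := by
    rw [bracketPow_pow_eq_map, bracketPow_pow_eq_map, Ideal.map_map, iterateFrobenius_succ']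
  rw [frobPow_eq_prod_range a hrk, Finset.prod_range_succ', frobPow_eq_prod_range a hk,
    ← Ideal.mapHom_apply, map_prod]
  simp only [hdigit, hbracket, Ideal.mapHom_apply, Ideal.map_pow, pow_zero, bracketPow_one,
    Nat.div_one, Nat.add_mul_mod_self_left, Nat.mod_eq_of_lt hr, mul_comm]

theorem frobPow_one : frobPow p a 1 = a := by
  simpa [Ideal.map_top] using frobPow_add_mul a (Fact.out : p.Prime).one_lt 0

theorem map_frobenius_le_pow : a.map (frobenius R p) ≤ a ^ p :=
  Ideal.map_le_iff_le_comap.mpr fun _ hx => Ideal.pow_mem_pow hx p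

theorem pow_mul_map_frobenius_le_of_le_mul {c : ℕ} {X Y : Ideal R} (h : X ≤ Y * a) :
    a ^ c * X.map (frobenius R p) ≤ a ^ (c + p) * Y.map (frobenius R p) :=
  calc a ^ c * X.map (frobenius R p) ≤ a ^ c * (Y.map (frobenius R p) * a.map (frobenius R p)) := by
        rw [← Ideal.map_mul]
        gcongr
    _ ≤ a ^ c * (Y.map (frobenius R p) * a ^ p) := by gcongr; exact map_frobenius_le_pow a
    _ = a ^ (c + p) * Y.map (frobenius R p) := by ring

theorem frobPow_add_le (m n : ℕ) : frobPow p a (m + n) ≤ frobPow p a m * frobPow p a n := by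
  induction hN : m + n using Nat.strong_induction_on generalizing m n with
  | _ N ih =>
  subst hN
  rcases Nat.eq_zero_or_pos (m + n) with h0 | hpos
  · obtain ⟨rfl, rfl⟩ : m = 0 ∧ n = 0 := by omega
    simp
  have hp := (Fact.out : p.Prime).one_lt
  obtain ⟨r, m, hr, rfl⟩ : ∃ r m', r < p ∧ r + p * m' = m :=
    ⟨m % p, m / p, Nat.mod_lt m (by omega), Nat.mod_add_div m p⟩
  obtain ⟨r', n, hr', rfl⟩ : ∃ r' n', r' < p ∧ r' + p * n' = n :=
    ⟨n % p, n / p, Nat.mod_lt n (by omega), Nat.mod_add_div n p⟩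
  have ih_mn : frobPow p a (m + n) ≤ frobPow p a m * frobPow p a n :=
    ih _ (by nlinarith) m n rfl
  rw [frobPow_add_mul a hr, frobPow_add_mul a hr']
  by_cases hcarry : r + r' < p
  · rw [show r + p * m + (r' + p * n) = r + r' + p * (m + n) by ring, frobPow_add_mul a hcarry]
    calc a ^ (r + r') * (frobPow p a (m + n)).map (frobenius R p)
        ≤ a ^ (r + r') * (frobPow p a m * frobPow p a n).map (frobenius R p) := by gcongr
      _ = _ := by rw [Ideal.map_mul, pow_add]; ring
  · rw [not_lt] at hcarry
    rw [show r + p * m + (r' + p * n) = r + r' - p + p * (m + n + 1) by zify [hcarry]; ring,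
      frobPow_add_mul a (by omega)]
    have ih_carry : frobPow p a (m + n + 1) ≤ frobPow p a m * frobPow p a n * a :=
      calc frobPow p a (m + n + 1) ≤ frobPow p a (m + n) * frobPow p a 1 :=
            ih _ (by nlinarith) _ _ rfl
        _ ≤ frobPow p a m * frobPow p a n * a := by rw [frobPow_one]; gcongr
    calc a ^ (r + r' - p) * (frobPow p a (m + n + 1)).map (frobenius R p)
        ≤ a ^ (r + r' - p + p) * (frobPow p a m * frobPow p a n).map (frobenius R p) :=
          pow_mul_map_frobenius_le_of_le_mul a ih_carry
      _ = _ := by rw [Nat.sub_add_cancel hcarry, Ideal.map_mul, pow_add]; ring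

theorem frobPow_antitone : Antitone (frobPow p a) := by
  intro k k' hkk'
  obtain ⟨n, rfl⟩ := Nat.exists_eq_add_of_le hkk'
  exact (frobPow_add_le a k n).trans Ideal.mul_le_left

theorem frobPow_add_pow_mul {e k : ℕ} (hk : k < p ^ e) (s : ℕ) :
    frobPow p a (k + p ^ e * s) = frobPow p a k * (frobPow p a s).map (iterateFrobenius R p e) := by
  induction e generalizing k with
  | zero =>
    obtain rfl : k = 0 := by simpa using hk
    simp
  | succ e ih =>
    have hp := (Fact.out : p.Prime).pos
    obtain ⟨r, k, hr, rfl⟩ : ∃ r k', r < p ∧ r + p * k' = k :=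
      ⟨k % p, k / p, Nat.mod_lt k hp, Nat.mod_add_div k p⟩
    have hk' : k < p ^ e := by rw [pow_succ'] at hk; nlinarith
    rw [show r + p * k + p ^ (e + 1) * s = r + p * (k + p ^ e * s) by ring,
      frobPow_add_mul a hr, frobPow_add_mul a hr, ih hk', Ideal.map_mul, Ideal.map_map,
      ← iterateFrobenius_succ', mul_assoc]

theorem frobPow_pow_mul (e s : ℕ) :
    frobPow p a (p ^ e * s) = (frobPow p a s).map (iterateFrobenius R p e) := by
  simpa using frobPow_add_pow_mul a (pow_pos (Fact.out : p.Prime).pos e) s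

end FrobeniusPower

section PRationalPower

variable {R : Type*} [CommRing R] {p : ℕ} (a : Ideal R)

@[simp]
theorem pRatPow_zero_right (k : ℕ) : pRatPow p a k 0 = frobPow p a k := by
  simp [pRatPow]

variable [Fact p.Prime] [CharP R p]

theorem pRatPow_antitone_left (e : ℕ) : Antitone fun k => pRatPow p a k e :=
  fun _ _ h => frobRoot_mono _ (frobPow_antitone a h)

variable [IsNoetherianRing R]

theorem pRatPow_pow_mul (hfin : (frobenius R p).Finite) (hflat : (frobenius R p).Flat)
    (k e j : ℕ) : pRatPow p a (p ^ j * k) (e + j) = pRatPow p a k e := by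
  rw [pRatPow, frobPow_pow_mul, frobRoot_pow_add_map hfin hflat, pRatPow]

theorem pRatPow_add_pow_mul_le (hfin : (frobenius R p).Finite) (hflat : (frobenius R p).Flat)
    (k e s : ℕ) : pRatPow p a (k + p ^ e * s) e ≤ frobPow p a s * pRatPow p a k e :=
  calc pRatPow p a (k + p ^ e * s) e
      ≤ frobRoot (p ^ e) ((frobPow p a s).map (iterateFrobenius R p e) * frobPow p a k) := by
        refine frobRoot_mono _ ((frobPow_add_le a _ _).trans_eq ?_)
        rw [frobPow_pow_mul, mul_comm]
    _ = frobPow p a s * pRatPow p a k e := frobRoot_map_mul hfin hflat _ _ _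

theorem pRatPow_add_pow_mul (hfin : (frobenius R p).Finite) (hflat : (frobenius R p).Flat)
    {k e : ℕ} (hk : k < p ^ e) (s : ℕ) :
    pRatPow p a (k + p ^ e * s) e = frobPow p a s * pRatPow p a k e := by
  rw [pRatPow, frobPow_add_pow_mul a hk, mul_comm, frobRoot_map_mul hfin hflat, pRatPow]

end PRationalPower

theorem pow_mul_le_of_natCast_le_div {p : ℕ} (hp : 0 < p) {s k e : ℕ}
    (h : (s : ℝ) ≤ k / (p : ℝ) ^ e) : p ^ e * s ≤ k := by
  rw [le_div_iff₀ (by positivity)] at h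
  exact_mod_cast (mul_comm _ _).trans_le h

theorem add_natCast_le_div_pow_iff {p : ℕ} (hp : 0 < p) (t : ℝ) (k e s : ℕ) :
    t + s ≤ ((k + p ^ e * s : ℕ) : ℝ) / (p : ℝ) ^ e ↔ t ≤ k / (p : ℝ) ^ e := by
  have hpe : (p : ℝ) ^ e ≠ 0 := by positivity
  push_cast
  rw [add_div, mul_div_cancel_left₀ _ hpe, add_le_add_iff_right]

theorem exists_le_div_pow_lt_one {p : ℕ} (hp : 1 < p) {t : ℝ} (ht : t < 1) {k e : ℕ}
    (h : t ≤ k / (p : ℝ) ^ e) :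
    ∃ j K : ℕ, K ≤ p ^ j * k ∧ K < p ^ (e + j) ∧ t ≤ K / (p : ℝ) ^ (e + j) := by
  obtain ⟨j, hj⟩ := pow_unbounded_of_one_lt (1 - t)⁻¹ (by exact_mod_cast hp : (1 : ℝ) < p)
  have hpe : (0 : ℝ) < (p : ℝ) ^ (e + j) := by positivity
  have hpos : 0 < p ^ (e + j) := by positivity
  refine ⟨j, min (p ^ j * k) (p ^ (e + j) - 1), min_le_left _ _,
    (min_le_right _ _).trans_lt (Nat.sub_lt hpos one_pos), ?_⟩
  rw [le_div_iff₀ hpe, Nat.cast_min, le_min_iff]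
  constructor
  · rw [le_div_iff₀ (by positivity)] at h
    push_cast
    calc t * (p : ℝ) ^ (e + j) = t * (p : ℝ) ^ e * (p : ℝ) ^ j := by ring
      _ ≤ k * (p : ℝ) ^ j := by gcongr
      _ = _ := by ring
  · rw [Nat.cast_pred hpos]
    push_cast
    rw [inv_lt_iff_one_lt_mul₀ (by linarith)] at hj
    have hpj : (1 - t) * (p : ℝ) ^ j ≤ (1 - t) * (p : ℝ) ^ (e + j) :=
      mul_le_mul_of_nonneg_left (pow_le_pow_right₀ (by exact_mod_cast hp.le) (by omega))
        (by linarith)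
    linarith

section RealPower

variable {R : Type*} [CommRing R] {p : ℕ} (a : Ideal R)

theorem pRatPow_le_realFrobPow {t : ℝ} {k e : ℕ} (h : t ≤ k / (p : ℝ) ^ e) :
    pRatPow p a k e ≤ realFrobPow p a t :=
  le_iSup₂_of_le k e (le_iSup_of_le h le_rfl)

theorem realFrobPow_le {t : ℝ} {I : Ideal R}
    (h : ∀ k e : ℕ, t ≤ k / (p : ℝ) ^ e → pRatPow p a k e ≤ I) : realFrobPow p a t ≤ I :=
  iSup₂_le fun k e => iSup_le (h k e)

variable [Fact p.Prime] [CharP R p]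

theorem realFrobPow_natCast (s : ℕ) : realFrobPow p a s = frobPow p a s := by
  have hp := (Fact.out : p.Prime).pos
  refine le_antisymm (realFrobPow_le a fun k e h => ?_) ?_
  · calc pRatPow p a k e ≤ pRatPow p a (p ^ e * s) e :=
          pRatPow_antitone_left a e (pow_mul_le_of_natCast_le_div hp h)
      _ ≤ frobPow p a s := by
          rw [pRatPow, frobPow_pow_mul]
          exact frobRoot_map_le p e _
  · rw [← pRatPow_zero_right]
    exact pRatPow_le_realFrobPow a (by simp)

variable [IsNoetherianRing R]

theorem realFrobPow_add_natCast_le (hfin : (frobenius R p).Finite)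
    (hflat : (frobenius R p).Flat) {t : ℝ} (ht : 0 ≤ t) (s : ℕ) :
    realFrobPow p a (t + s) ≤ frobPow p a s * realFrobPow p a t := by
  have hp := (Fact.out : p.Prime).pos
  refine realFrobPow_le a fun k e h => ?_
  obtain ⟨m, rfl⟩ := Nat.exists_eq_add_of_le'
    (pow_mul_le_of_natCast_le_div hp ((le_add_of_nonneg_left ht).trans h))
  rw [add_natCast_le_div_pow_iff hp] at h
  exact (pRatPow_add_pow_mul_le a hfin hflat m e s).trans
    (Ideal.mul_mono_right (pRatPow_le_realFrobPow a h))

theorem le_realFrobPow_add_natCast (hfin : (frobenius R p).Finite)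
    (hflat : (frobenius R p).Flat) {t : ℝ} (ht : t < 1) (s : ℕ) :
    frobPow p a s * realFrobPow p a t ≤ realFrobPow p a (t + s) := by
  have hp := (Fact.out : p.Prime).one_lt
  simp only [realFrobPow, Ideal.mul_iSup]
  refine iSup₂_le fun k e => iSup_le fun h => ?_
  obtain ⟨j, K, hKk, hK, htK⟩ := exists_le_div_pow_lt_one hp ht h
  calc frobPow p a s * pRatPow p a k e = frobPow p a s * pRatPow p a (p ^ j * k) (e + j) := by
        rw [pRatPow_pow_mul a hfin hflat]
    _ ≤ frobPow p a s * pRatPow p a K (e + j) :=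
        Ideal.mul_mono_right (pRatPow_antitone_left a _ hKk)
    _ = pRatPow p a (K + p ^ (e + j) * s) (e + j) := (pRatPow_add_pow_mul a hfin hflat hK s).symm
    _ ≤ _ := pRatPow_le_realFrobPow a ((add_natCast_le_div_pow_iff (by omega) t K _ s).mpr htK)

theorem realFrobPow_add_natCast (hfin : (frobenius R p).Finite) (hflat : (frobenius R p).Flat)
    {t : ℝ} (ht₀ : 0 ≤ t) (ht₁ : t < 1) (s : ℕ) :
    realFrobPow p a (t + s) = realFrobPow p a t * realFrobPow p a s := by
  rw [realFrobPow_natCast, mul_comm]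
  exact le_antisymm (realFrobPow_add_natCast_le a hfin hflat ht₀ s)
    (le_realFrobPow_add_natCast a hfin hflat ht₁ s)

end RealPower

theorem stmt_15_general {R : Type*} [CommRing R] [IsNoetherianRing R]
    (p : ℕ) [Fact p.Prime] [CharP R p]
    (hFfin : (frobenius R p).Finite) (hreg : (frobenius R p).Flat)
    (a : Ideal R) :
    (∀ t : ℝ, 0 ≤ t → t < 1 → ∀ s : ℕ,
        realFrobPow p a (t + s) = realFrobPow p a t * realFrobPow p a (s : ℝ)) ∧
      ∀ t : ℝ, 0 ≤ t →
        realFrobPow p a t =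
          realFrobPow p a ((⌊t⌋₊ : ℕ) : ℝ) * realFrobPow p a (Int.fract t) := by
  refine ⟨fun t ht₀ ht₁ s => realFrobPow_add_natCast a hFfin hreg ht₀ ht₁ s, fun t ht => ?_⟩
  calc realFrobPow p a t = realFrobPow p a (Int.fract t + ⌊t⌋₊) := by
        rw [natCast_floor_eq_intCast_floor ht, Int.fract_add_floor]
    _ = _ := by
        rw [realFrobPow_add_natCast a hFfin hreg (Int.fract_nonneg t) (Int.fract_lt_one t),
          mul_comm]

/-- Skoda-type theorem for real Frobenius powers. -/
theorem stmt_15 {R : Type*} [CommRing R] [IsDomain R] [IsNoetherianRing R]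
    (p : ℕ) [Fact p.Prime] [CharP R p]
    (hFfin : (frobenius R p).Finite) (hreg : (frobenius R p).Flat)
    (a : Ideal R) (ha : a ≠ ⊥) :
    (∀ t : ℝ, 0 ≤ t → t < 1 → ∀ s : ℕ,
        realFrobPow p a (t + s) = realFrobPow p a t * realFrobPow p a (s : ℝ)) ∧
      ∀ t : ℝ, 0 ≤ t →
        realFrobPow p a t =
          realFrobPow p a ((⌊t⌋₊ : ℕ) : ℝ) * realFrobPow p a (Int.fract t) :=
  stmt_15_general p hFfin hreg a
end

section
/- Let R be a regular F-finite domain of prime characteristic p, and let 𝔞 ⊆ 𝔟 be nonzero proper ideals with 𝔞 generated by m elements. Fix q a power of p and suppose μ(q) = max{k : 𝔞^[k] ⊄ 𝔟^[q]} satisfies μ(q) ≠ q − 1. Then μ(q) ≥ ν(q) − (m−1)(q−1)/(p−1), where ν(q) = max{k : 𝔞^k ⊄ 𝔟^[q]}. -/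
open scoped BigOperators

/-! Write `q = pᵉ` and `S = ∑_{i<e} pⁱ = (q-1)/(p-1)`. For `j < q`, every monomial of degree
`j + (m-1)S` in the `m` generators of `𝔞` lies in `𝔞^[j]`: if `c` is the leading base-`p` digit
of `j` and `P = p^(e-1)`, a monomial of degree `cP + (m-1)(P-1)` has exponents whose quotients
by `P` sum to at least `c` (pigeonhole), so it lies in `(𝔞^[P])^c`, and the remaining degree
takes care of the lower digits by induction on `e`.

Any `k ≥ q` has a digit `≥ 1` in a position `≥ e`, so `𝔞^[k] ⊆ 𝔟^[q]` and `μ(q) < q`; together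
with `μ(q) ≠ q - 1` this gives `𝔞^[q-1] ⊆ 𝔟^[q]`. Now if `𝔞^k ⊄ 𝔟^[q]` with `k ≥ (m-1)S`, then
`j = min(k - (m-1)S, q-1)` has `𝔞^[j] ⊄ 𝔟^[q]`, hence `j ≠ q - 1` and `k - (m-1)S = j ≤ μ(q)`. -/

open Finset

section BracketPow

variable {R : Type*} [CommRing R]

lemma pow_mem_bracketPow {a : Ideal R} {x : R} (hx : x ∈ a) (q : ℕ) : x ^ q ∈ bracketPow a q :=
  Ideal.subset_span ⟨x, hx, rfl⟩

lemma bracketPow_mono {a b : Ideal R} (hab : a ≤ b) (q : ℕ) : bracketPow a q ≤ bracketPow b q :=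
  Ideal.span_mono (Set.image_mono hab)

lemma bracketPow_le_of_dvd (a : Ideal R) {q n : ℕ} (hqn : q ∣ n) (hn : n ≠ 0) :
    bracketPow a n ≤ bracketPow a q := by
  obtain ⟨d, rfl⟩ := hqn
  refine Ideal.span_le.2 ?_
  rintro _ ⟨x, hx, rfl⟩
  change x ^ (q * d) ∈ bracketPow a q
  rw [mul_comm, pow_mul]
  exact pow_mem_bracketPow (a.pow_mem_of_mem hx d (Nat.pos_of_ne_zero (right_ne_zero_of_mul hn))) q

lemma le_sum_div_of_mul_add_le_sum {ι : Type*} (s : Finset ι) (α : ι → ℕ) {P c : ℕ} (hP : 0 < P)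
    (h : c * P + (#s - 1) * (P - 1) ≤ ∑ i ∈ s, α i) : c ≤ ∑ i ∈ s, α i / P := by
  have hsum : ∑ i ∈ s, α i ≤ (∑ i ∈ s, α i / P) * P + #s * (P - 1) := by
    rw [sum_mul, ← smul_eq_mul, ← sum_const, ← sum_add_distrib]
    refine sum_le_sum fun i _ => ?_
    have := Nat.div_add_mod' (α i) P
    have := Nat.mod_lt (α i) hP
    omega
  have hcard : #s * (P - 1) < P + (#s - 1) * (P - 1) := by
    rcases Nat.eq_zero_or_eq_succ_pred #s with h0 | h1
    · rw [h0]; omega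
    · rw [h1, Nat.succ_sub_one, Nat.succ_mul]; omega
  by_contra! hlt
  have := Nat.mul_le_mul_right P (Nat.succ_le_of_lt hlt)
  rw [Nat.succ_mul] at this
  omega

lemma span_range_pow_le_of_forall_prod_mem {m : ℕ} (g : Fin m → R) (N : ℕ) {J : Ideal R}
    (h : ∀ α : Fin m → ℕ, ∑ t, α t = N → ∏ t, g t ^ α t ∈ J) :
    Ideal.span (Set.range g) ^ N ≤ J := by
  change Submodule.span R (Set.range g) ^ N ≤ J
  rw [Submodule.span_pow, Submodule.span_le]
  intro x hx
  obtain ⟨f, rfl⟩ := Set.mem_pow.1 hx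
  choose idx hidx using fun i => (f i).2
  have hprod : (List.ofFn fun i => (f i : R)).prod = ∏ t, g t ^ #{i | idx i = t} := by
    rw [List.prod_ofFn, ← prod_fiberwise univ idx]
    refine prod_congr rfl fun t _ => ?_
    rw [← prod_const]
    exact prod_congr rfl fun i hi => by rw [← hidx i, (mem_filter.1 hi).2]
  rw [hprod]
  exact h _ (by
    rw [← card_eq_sum_card_fiberwise fun i _ => mem_univ (idx i), card_univ, Fintype.card_fin])

lemma span_range_pow_le_bracketPow_pow {m : ℕ} (g : Fin m → R) {P : ℕ} (hP : 0 < P) (c : ℕ) :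
    Ideal.span (Set.range g) ^ (c * P + (m - 1) * (P - 1)) ≤
      bracketPow (Ideal.span (Set.range g)) P ^ c := by
  refine span_range_pow_le_of_forall_prod_mem g _ fun α hα => ?_
  have hc : c ≤ ∑ t, α t / P :=
    le_sum_div_of_mul_add_le_sum univ α hP (by rw [card_univ, Fintype.card_fin, hα])
  have hsplit : ∏ t, g t ^ α t = (∏ t, g t ^ (α t % P)) * ∏ t, (g t ^ P) ^ (α t / P) := by
    rw [← prod_mul_distrib]
    refine prod_congr rfl fun t _ => ?_
    rw [← pow_mul, ← pow_add, add_comm, Nat.div_add_mod]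
  rw [hsplit]
  refine Ideal.mul_mem_left _ _ (Ideal.pow_le_pow_right hc ?_)
  rw [← prod_pow_eq_pow_sum]
  exact Ideal.prod_mem_prod fun t _ => Ideal.pow_mem_pow
    (pow_mem_bracketPow (Ideal.subset_span (Set.mem_range_self t)) P) _

end BracketPow

section FrobPow

variable {R : Type*} [CommRing R] {p : ℕ}

lemma frobPow_eq_prod_range_s18 (hp : 1 < p) (a : Ideal R) {j e : ℕ} (hj : j < p ^ e) :
    frobPow p a j = ∏ i ∈ range e, bracketPow a (p ^ i) ^ (j / p ^ i % p) := by
  have extend : ∀ {n n' : ℕ}, n ≤ n' → j < p ^ n →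
      ∏ i ∈ range n, bracketPow a (p ^ i) ^ (j / p ^ i % p) =
        ∏ i ∈ range n', bracketPow a (p ^ i) ^ (j / p ^ i % p) := fun hnn' hjn =>
    prod_subset (range_subset_range.2 hnn') fun i _ hi => by
      rw [Nat.div_eq_of_lt (hjn.trans_le (Nat.pow_le_pow_right (by omega) (by simpa using hi))),
        Nat.zero_mod, pow_zero]
  rw [frobPow, extend (Nat.le_add_right (j + 1) e)
      ((Nat.lt_pow_self hp).trans_le (Nat.pow_le_pow_right (by omega) j.le_succ)),
    ← extend (Nat.le_add_left e (j + 1)) hj]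

lemma frobPow_eq_frobPow_mod_mul (hp : 1 < p) (a : Ideal R) {j e : ℕ} (hj : j < p ^ (e + 1)) :
    frobPow p a j = frobPow p a (j % p ^ e) * bracketPow a (p ^ e) ^ (j / p ^ e) := by
  have hpe : 0 < p ^ e := by positivity
  have hlead : j / p ^ e < p := by rwa [Nat.div_lt_iff_lt_mul hpe, ← pow_succ']
  rw [frobPow_eq_prod_range_s18 hp a hj, frobPow_eq_prod_range_s18 hp a (Nat.mod_lt j hpe),
    prod_range_succ, Nat.mod_eq_of_lt hlead]
  congr 1
  refine prod_congr rfl fun i hi => ?_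
  rw [← Nat.mod_mul_right_div_self, ← Nat.mod_mul_right_div_self, ← pow_succ,
    Nat.mod_mod_of_dvd _ (pow_dvd_pow p (mem_range.1 hi))]

lemma frobPow_le_bracketPow_pow_log (hp : 1 < p) (a : Ideal R) {k : ℕ} (hk : k ≠ 0) :
    frobPow p a k ≤ bracketPow a (p ^ Nat.log p k) := by
  set i := Nat.log p k
  have hlead : k / p ^ i % p ≠ 0 := by
    have hpi : 0 < p ^ i := by positivity
    have hlt : k / p ^ i < p := by
      rw [Nat.div_lt_iff_lt_mul hpi, ← pow_succ']
      exact Nat.lt_pow_succ_log_self hp k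
    rw [Nat.mod_eq_of_lt hlt]
    exact (Nat.div_pos (Nat.pow_log_le_self p hk) hpi).ne'
  have hi : i ∈ range (k + 1) :=
    mem_range.2 (Nat.lt_succ_of_le ((Nat.lt_pow_self hp).le.trans (Nat.pow_log_le_self p hk)))
  exact Ideal.prod_le_inf.trans ((inf_le hi).trans (Ideal.pow_le_self hlead))

lemma frobPow_le_bracketPow_of_pow_le (hp : 1 < p) (a : Ideal R) {e k : ℕ} (hk : p ^ e ≤ k) :
    frobPow p a k ≤ bracketPow a (p ^ e) :=
  (frobPow_le_bracketPow_pow_log hp a ((pow_pos (by omega) e).trans_le hk).ne').trans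
    (bracketPow_le_of_dvd a (pow_dvd_pow p (Nat.le_log_of_pow_le hp hk))
      (pow_pos (by omega) _).ne')

lemma span_range_pow_le_frobPow {m : ℕ} (g : Fin m → R) (hp : 1 < p) {e j : ℕ} (hj : j < p ^ e) :
    Ideal.span (Set.range g) ^ (j + (m - 1) * ∑ i ∈ range e, p ^ i) ≤
      frobPow p (Ideal.span (Set.range g)) j := by
  induction e generalizing j with
  | zero => simp [frobPow, Nat.lt_one_iff.1 (by simpa using hj)]
  | succ e ih =>
    have hP : 0 < p ^ e := by positivity
    have hdeg : j / p ^ e * p ^ e + (m - 1) * (p ^ e - 1) +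
        (j % p ^ e + (m - 1) * ∑ i ∈ range e, p ^ i) ≤
        j + (m - 1) * ∑ i ∈ range (e + 1), p ^ i := by
      have := Nat.div_add_mod' j (p ^ e)
      have := Nat.mul_le_mul_left (m - 1) (Nat.sub_le (p ^ e) 1)
      rw [sum_range_succ, mul_add]
      omega
    rw [frobPow_eq_frobPow_mod_mul hp _ hj]
    calc _ ≤ _ := Ideal.pow_le_pow_right hdeg
      _ = _ := pow_add _ _ _
      _ ≤ _ := Ideal.mul_mono (span_range_pow_le_bracketPow_pow g hP _) (ih (Nat.mod_lt j hP))
      _ = _ := mul_comm _ _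

end FrobPow

theorem stmt_18_general {R : Type*} [CommRing R]
    (p : ℕ) [Fact p.Prime]
    (m : ℕ) (a b : Ideal R) (g : Fin m → R) (hg : a = Ideal.span (Set.range g))
    (hab : a ≤ b)
    (e : ℕ)
    (hmu : sSup {k : ℕ | ¬ frobPow p a k ≤ bracketPow b (p ^ e)} ≠ p ^ e - 1) :
    sSup {k : ℕ | ¬ a ^ k ≤ bracketPow b (p ^ e)} ≤
      sSup {k : ℕ | ¬ frobPow p a k ≤ bracketPow b (p ^ e)} +
        (m - 1) * ∑ i ∈ Finset.range e, p ^ i := by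
  have hp : 1 < p := (Fact.out : p.Prime).one_lt
  set μs := {k : ℕ | ¬ frobPow p a k ≤ bracketPow b (p ^ e)}
  have hμlt : ∀ k ∈ μs, k < p ^ e := fun k hk => not_le.1 fun hk' =>
    hk ((frobPow_le_bracketPow_of_pow_le hp a hk').trans (bracketPow_mono hab _))
  have hμbdd : BddAbove μs := ⟨p ^ e, fun k hk => (hμlt k hk).le⟩
  have htop : frobPow p a (p ^ e - 1) ≤ bracketPow b (p ^ e) := by
    by_contra h
    exact hmu (le_antisymm (csSup_le' fun k hk => Nat.le_sub_one_of_lt (hμlt k hk))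
      (le_csSup hμbdd h))
  set D := (m - 1) * ∑ i ∈ range e, p ^ i
  refine csSup_le' fun k hk => ?_
  rcases lt_or_ge k D with hkD | hkD
  · omega
  have hq : 0 < p ^ e := by positivity
  set j := min (k - D) (p ^ e - 1) with hj_def
  have hj : j ∈ μs := fun hle => hk <| calc
    a ^ k ≤ a ^ (j + D) := Ideal.pow_le_pow_right (by omega)
    _ ≤ frobPow p a j := hg ▸ span_range_pow_le_frobPow g hp (by omega)
    _ ≤ bracketPow b (p ^ e) := hle
  have hjtop : j ≠ p ^ e - 1 := fun h => hj (h ▸ htop)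
  have := le_csSup hμbdd hj
  omega

/-- If `μ(q) = max{k : 𝔞^[k] ⊄ 𝔟^[q]} ≠ q − 1` for `q = pᵉ`, then
`ν(q) ≤ μ(q) + (m−1)(q−1)/(p−1)`, where `ν(q) = max{k : 𝔞^k ⊄ 𝔟^[q]}` and
`(q−1)/(p−1) = ∑_{i<e} pⁱ`. -/
theorem stmt_18 {R : Type*} [CommRing R] [IsDomain R] [IsNoetherianRing R]
    (p : ℕ) [Fact p.Prime] [CharP R p]
    (hFfin : (frobenius R p).Finite) (hreg : (frobenius R p).Flat)
    (m : ℕ) (a b : Ideal R) (g : Fin m → R) (hg : a = Ideal.span (Set.range g))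
    (ha0 : a ≠ ⊥) (hb0 : b ≠ ⊥) (haT : a ≠ ⊤) (hbT : b ≠ ⊤) (hab : a ≤ b)
    (e : ℕ)
    (hmu : sSup {k : ℕ | ¬ frobPow p a k ≤ bracketPow b (p ^ e)} ≠ p ^ e - 1) :
    sSup {k : ℕ | ¬ a ^ k ≤ bracketPow b (p ^ e)} ≤
      sSup {k : ℕ | ¬ frobPow p a k ≤ bracketPow b (p ^ e)} +
        (m - 1) * ∑ i ∈ Finset.range e, p ^ i :=
  stmt_18_general p m a b g hg hab e hmu
end
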